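/- For all distinct m, k ∈ {1, …, l}, the sum of the residues of Υ_{m,m,k} at μ = κ_m and at μ = κ_m^{−1} exists and equals p_{mk} := κ_m(κ_k² − 1)/((κ_m − κ_k)(κ_m·κ_k − 1)). Precisely: there exists ε > 0 such that for every r with 0 < r < ε, (2πi)^{−1}·(∮_{|μ−κ_m|=r} Υ_{m,m,k}(μ) dμ + ∮_{|μ−κ_m^{−1}|=r} Υ_{m,m,k}(μ) dμ) = p_{mk}. -/

import Mathlib

open Complex Filter Topology

/-- The factor `-κ_m/(μ-κ_m) + κ_m⁻¹/(μ-κ_m⁻¹)` for an index `m ≤ l`, and `1`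
for the index `m = l+1`. -/
noncomputable def upsFactor (l : ℕ) (κ : ℕ → ℂ) (m : ℕ) (μ : ℂ) : ℂ :=
  if m ≤ l then -κ m / (μ - κ m) + (κ m)⁻¹ / (μ - (κ m)⁻¹) else 1

/-- The denominator
`D(μ) = ∑_{r=1}^l (1/(μ-κ_r) + 1/(μ-κ_r⁻¹)) - (l-2)/μ - 4μ/(μ²-1)`. -/
noncomputable def upsD (l : ℕ) (κ : ℕ → ℂ) (μ : ℂ) : ℂ :=
  (∑ r ∈ Finset.Icc 1 l, (1 / (μ - κ r) + 1 / (μ - (κ r)⁻¹)))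
    - ((l : ℂ) - 2) / μ - 4 * μ / (μ ^ 2 - 1)

/-- The integrand `Υ_{ijk}(μ) = -N_{ijk}(μ) / (2 μ² D(μ))` computing the residue
contributions to the dual Landau–Ginzburg product of the `D_l` relativistic
Toda spectral curve. -/
noncomputable def Ups (l : ℕ) (κ : ℕ → ℂ) (i j k : ℕ) (μ : ℂ) : ℂ :=
  -(upsFactor l κ i μ * upsFactor l κ j μ * upsFactor l κ k μ)
    / (2 * μ ^ 2 * upsD l κ μ)

/-! Write `a` for `κ_m` or `κ_m⁻¹`. Near `a` the `m`-th factor equals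
`(a⁻¹ - a) μ / ((μ - a)(μ - a⁻¹))`, so its square has a double pole at `a` whose `μ²` cancels
the `μ²` in the denominator of `Υ`, while `D` has a simple pole at `a` with residue `1`.
Hence `Υ_{mmk}` has a simple pole at `a` with residue `-F_k(a)/2`, `F_k` being the `k`-th factor.
As `F_k(μ⁻¹) = F_k(μ)`, the two residues coincide and sum to `-F_k(κ_m) = p_{mk}`. -/

open Metric Finset

theorem exists_circleIntegral_eq_of_eventuallyEq_inv_sub_mul {g f : ℂ → ℂ} {a : ℂ}
    (hf : AnalyticAt ℂ f a) (hg : g =ᶠ[𝓝[≠] a] fun μ => (μ - a)⁻¹ * f μ) :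
    ∃ ε > (0 : ℝ), ∀ r : ℝ, 0 < r → r < ε →
      (∮ μ in C(a, r), g μ) = 2 * Real.pi * I * f a := by
  obtain ⟨ε, hε, hball⟩ := Metric.eventually_nhds_iff_ball.mp
    (hf.eventually_analyticAt.and (eventually_nhdsWithin_iff.mp hg))
  refine ⟨ε, hε, fun r hr hrε => ?_⟩
  have hsub : closedBall a r ⊆ ball a ε := closedBall_subset_ball hrε
  have hcongr : (∮ μ in C(a, r), g μ) = ∮ μ in C(a, r), (μ - a)⁻¹ • f μ := by
    refine circleIntegral.integral_congr hr.le fun μ hμ => ?_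
    have hμa : μ ≠ a := ne_of_mem_sphere hμ hr.ne'
    exact (hball μ (hsub (sphere_subset_closedBall hμ))).2 hμa
  rw [hcongr, DifferentiableOn.circleIntegral_sub_inv_smul
    (fun μ hμ => (hball μ (hsub hμ)).1.differentiableAt.differentiableWithinAt)
    (mem_ball_self hr), smul_eq_mul]

theorem div_sq_div_inv_add {K : Type*} [Field K] (x y h : K) (hy : y ≠ 0) :
    x / y ^ 2 / (y⁻¹ + h) = y⁻¹ * (x / (1 + y * h)) := by
  rw [show y⁻¹ + h = (1 + y * h) / y by field_simp]
  by_cases hE : 1 + y * h = 0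
  · simp [hE]
  · field_simp

theorem exists_circleIntegral_div_sq_div_eq {g φ h : ℂ → ℂ} {a : ℂ}
    (hφ : AnalyticAt ℂ φ a) (hh : AnalyticAt ℂ h a)
    (hg : g =ᶠ[𝓝[≠] a] fun μ => φ μ / (μ - a) ^ 2 / ((μ - a)⁻¹ + h μ)) :
    ∃ ε > (0 : ℝ), ∀ r : ℝ, 0 < r → r < ε →
      (∮ μ in C(a, r), g μ) = 2 * Real.pi * I * φ a := by
  have hE : AnalyticAt ℂ (fun μ => φ μ / (1 + (μ - a) * h μ)) a := by
    fun_prop (disch := simp)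
  have hg' : g =ᶠ[𝓝[≠] a] fun μ => (μ - a)⁻¹ * (φ μ / (1 + (μ - a) * h μ)) :=
    hg.trans (eventually_nhdsWithin_of_forall fun μ hμ =>
      div_sq_div_inv_add _ _ _ (sub_ne_zero.mpr hμ))
  simpa using exists_circleIntegral_eq_of_eventuallyEq_inv_sub_mul hE hg'

section Toda

variable {l : ℕ} {κ : ℕ → ℂ}

noncomputable def upsDReg (l : ℕ) (κ : ℕ → ℂ) (m : ℕ) (a μ : ℂ) : ℂ :=
  (∑ r ∈ (Icc 1 l).erase m, (1 / (μ - κ r) + 1 / (μ - (κ r)⁻¹)))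
    + 1 / (μ - a⁻¹) - ((l : ℂ) - 2) / μ - 4 * μ / (μ ^ 2 - 1)

theorem upsD_eq_inv_sub_add_upsDReg {m : ℕ} {a : ℂ} (hm : m ∈ Icc 1 l)
    (ha : κ m = a ∨ κ m = a⁻¹) (μ : ℂ) :
    upsD l κ μ = (μ - a)⁻¹ + upsDReg l κ m a μ := by
  rw [upsD, upsDReg, ← add_sum_erase _ _ hm]
  rcases ha with ha | ha <;> simp only [ha, inv_inv] <;> ring

theorem analyticAt_upsDReg {m : ℕ} {a z : ℂ} (h0 : z ≠ 0) (h1 : z ^ 2 ≠ 1) (ha : z ≠ a⁻¹)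
    (hr : ∀ r ∈ (Icc 1 l).erase m, z ≠ κ r ∧ z ≠ (κ r)⁻¹) :
    AnalyticAt ℂ (upsDReg l κ m a) z := by
  have hsum : AnalyticAt ℂ
      (fun μ => ∑ r ∈ (Icc 1 l).erase m, (1 / (μ - κ r) + 1 / (μ - (κ r)⁻¹))) z :=
    Finset.analyticAt_fun_sum _ fun r hr' => by
      have := hr r hr'
      fun_prop (disch := simp [sub_ne_zero, this])
  have h1' : z ^ 2 - 1 ≠ 0 := sub_ne_zero.mpr h1
  unfold upsDReg
  refine ((hsum.add ?_).sub ?_).sub ?_ <;>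
    fun_prop (disch := first | assumption | exact sub_ne_zero.mpr ha)

theorem upsFactor_eq_mul_div {k : ℕ} (hk : k ≤ l) {μ : ℂ} (h1 : μ ≠ κ k)
    (h2 : μ ≠ (κ k)⁻¹) :
    upsFactor l κ k μ = ((κ k)⁻¹ - κ k) * μ / ((μ - κ k) * (μ - (κ k)⁻¹)) := by
  rw [upsFactor, if_pos hk, div_add_div _ _ (sub_ne_zero.mpr h1) (sub_ne_zero.mpr h2)]
  ring

theorem upsFactor_sq_eq {m : ℕ} (hm : m ≤ l) {a μ : ℂ} (ha : κ m = a ∨ κ m = a⁻¹)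
    (h1 : μ ≠ a) (h2 : μ ≠ a⁻¹) :
    upsFactor l κ m μ ^ 2 = ((a⁻¹ - a) * μ / ((μ - a) * (μ - a⁻¹))) ^ 2 := by
  rcases ha with ha | ha
  · rw [upsFactor_eq_mul_div hm (ha ▸ h1) (ha ▸ h2), ha]
  · rw [upsFactor_eq_mul_div hm (by rwa [ha]) (by rwa [ha, inv_inv]), ha,
      inv_inv]
    ring

theorem upsFactor_inv {k : ℕ} (h0 : κ k ≠ 0) {μ : ℂ} (h1 : μ ≠ κ k) (h2 : μ ≠ (κ k)⁻¹) :
    upsFactor l κ k μ⁻¹ = upsFactor l κ k μ := by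
  by_cases hk : k ≤ l
  · by_cases hμ : μ = 0
    · rw [hμ, inv_zero]
    have h1' : μ⁻¹ ≠ κ k := fun h => h2 (by rw [← h, inv_inv])
    have h2' : μ⁻¹ ≠ (κ k)⁻¹ := fun h => h1 (inv_injective h)
    rw [upsFactor_eq_mul_div hk h1 h2, upsFactor_eq_mul_div hk h1' h2',
      div_eq_div_iff (mul_ne_zero (sub_ne_zero.mpr h1') (sub_ne_zero.mpr h2'))
        (mul_ne_zero (sub_ne_zero.mpr h1) (sub_ne_zero.mpr h2))]
    field_simp
    ring
  · simp [upsFactor, hk]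

theorem analyticAt_upsFactor {k : ℕ} {z : ℂ} (h1 : z ≠ κ k) (h2 : z ≠ (κ k)⁻¹) :
    AnalyticAt ℂ (upsFactor l κ k) z := by
  by_cases hk : k ≤ l
  · unfold upsFactor
    simp only [if_pos hk]
    fun_prop (disch := simp [sub_ne_zero, h1, h2])
  · unfold upsFactor
    simp only [if_neg hk]
    fun_prop

theorem ne_and_ne_inv_of_eq_or_eq_inv {x y a : ℂ} (hy : y ≠ 0) (hne : x ≠ y) (hmul : x * y ≠ 1)
    (ha : a = x ∨ a = x⁻¹) : a ≠ y ∧ a ≠ y⁻¹ := by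
  have hinv : x ≠ y⁻¹ := (mul_eq_one_iff_eq_inv₀ hy).not.mp hmul
  rcases ha with rfl | rfl
  · exact ⟨hne, hinv⟩
  · exact ⟨fun h => hinv (inv_eq_iff_eq_inv.mp h), inv_injective.ne hne⟩

theorem Ups_eventuallyEq {m k : ℕ} {a : ℂ} (hm : m ∈ Icc 1 l) (ha : κ m = a ∨ κ m = a⁻¹)
    (h0 : a ≠ 0) (h1 : a ^ 2 ≠ 1) :
    Ups l κ m m k =ᶠ[𝓝[≠] a] fun μ =>
      -((a⁻¹ - a) ^ 2 * upsFactor l κ k μ) / (2 * (μ - a⁻¹) ^ 2) / (μ - a) ^ 2 /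
        ((μ - a)⁻¹ + upsDReg l κ m a μ) := by
  have ha' : a ≠ a⁻¹ := (mul_eq_one_iff_eq_inv₀ h0).not.mp (by rwa [← sq])
  filter_upwards [self_mem_nhdsWithin, nhdsWithin_le_nhds (eventually_ne_nhds h0),
    nhdsWithin_le_nhds (eventually_ne_nhds ha')] with μ hμa hμ0 hμb
  have hsq := upsFactor_sq_eq (mem_Icc.mp hm).2 ha hμa hμb
  rw [Ups, upsD_eq_inv_sub_add_upsDReg hm ha, ← sq, hsq]
  have hμa' : μ - a ≠ 0 := sub_ne_zero.mpr hμa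
  have hμb' : μ - a⁻¹ ≠ 0 := sub_ne_zero.mpr hμb
  field_simp

theorem exists_circleIntegral_Ups_eq {m k : ℕ} {a : ℂ} (hm : m ∈ Icc 1 l)
    (ha : κ m = a ∨ κ m = a⁻¹) (h0 : a ≠ 0) (h1 : a ^ 2 ≠ 1)
    (hk : a ≠ κ k ∧ a ≠ (κ k)⁻¹) (hr : ∀ r ∈ (Icc 1 l).erase m, a ≠ κ r ∧ a ≠ (κ r)⁻¹) :
    ∃ ε > (0 : ℝ), ∀ r : ℝ, 0 < r → r < ε →
      (∮ μ in C(a, r), Ups l κ m m k μ) = 2 * Real.pi * I * (-upsFactor l κ k a / 2) := by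
  have ha' : a - a⁻¹ ≠ 0 :=
    sub_ne_zero.mpr ((mul_eq_one_iff_eq_inv₀ h0).not.mp (by rwa [← sq]))
  have hφ : AnalyticAt ℂ
      (fun μ => -((a⁻¹ - a) ^ 2 * upsFactor l κ k μ) / (2 * (μ - a⁻¹) ^ 2)) a := by
    have := analyticAt_upsFactor (l := l) hk.1 hk.2
    fun_prop (disch := simp [ha'])
  have hres := exists_circleIntegral_div_sq_div_eq hφ
    (analyticAt_upsDReg h0 h1 (sub_ne_zero.mp ha') hr) (Ups_eventuallyEq hm ha h0 h1)
  have hφa : -((a⁻¹ - a) ^ 2 * upsFactor l κ k a) / (2 * (a - a⁻¹) ^ 2) =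
      -upsFactor l κ k a / 2 := by
    field_simp
    ring
  rwa [hφa] at hres

theorem neg_upsFactor_eq {k : ℕ} (hk : k ≤ l) (h0 : κ k ≠ 0) {z : ℂ} (h1 : z ≠ κ k)
    (h2 : z * κ k ≠ 1) :
    -upsFactor l κ k z = z * (κ k ^ 2 - 1) / ((z - κ k) * (z * κ k - 1)) := by
  have h1' : z - κ k ≠ 0 := sub_ne_zero.mpr h1
  have h2' : z * κ k - 1 ≠ 0 := sub_ne_zero.mpr h2
  rw [upsFactor_eq_mul_div hk h1 ((mul_eq_one_iff_eq_inv₀ h0).not.mp h2)]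
  field_simp
  ring

end Toda

theorem stmt6_general (l : ℕ) (κ : ℕ → ℂ)
    (hκ : ∀ r ∈ Finset.Icc 1 l, κ r ≠ 0 ∧ κ r ≠ 1 ∧ κ r ≠ -1)
    (hκ' : ∀ r ∈ Finset.Icc 1 l, ∀ s ∈ Finset.Icc 1 l, r ≠ s →
      κ r ≠ κ s ∧ κ r * κ s ≠ 1)
    (m k : ℕ) (hm : m ∈ Finset.Icc 1 l) (hk : k ∈ Finset.Icc 1 l) (hmk : m ≠ k) :
    ∃ ε > (0 : ℝ), ∀ r : ℝ, 0 < r → r < ε →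
      (2 * Real.pi * Complex.I)⁻¹ *
        ((∮ μ in C(κ m, r), Ups l κ m m k μ) +
          (∮ μ in C((κ m)⁻¹, r), Ups l κ m m k μ)) =
      κ m * (κ k ^ 2 - 1) / ((κ m - κ k) * (κ m * κ k - 1)) := by
  obtain ⟨h0, h1, h1'⟩ := hκ m hm
  have hsq : κ m ^ 2 ≠ 1 := by rw [Ne, sq_eq_one_iff]; tauto
  have hsep : ∀ a, (a = κ m ∨ a = (κ m)⁻¹) → ∀ r ∈ (Icc 1 l).erase m,
      a ≠ κ r ∧ a ≠ (κ r)⁻¹ := fun a ha r hr => by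
    obtain ⟨hrm, hr⟩ := mem_erase.mp hr
    exact ne_and_ne_inv_of_eq_or_eq_inv (hκ r hr).1 (hκ' m hm r hr hrm.symm).1
      (hκ' m hm r hr hrm.symm).2 ha
  have hk' : k ∈ (Icc 1 l).erase m := mem_erase.mpr ⟨hmk.symm, hk⟩
  obtain ⟨ε₁, hε₁, H₁⟩ := exists_circleIntegral_Ups_eq (k := k) hm (Or.inl rfl) h0 hsq
    (hsep _ (Or.inl rfl) k hk') (hsep _ (Or.inl rfl))
  obtain ⟨ε₂, hε₂, H₂⟩ := exists_circleIntegral_Ups_eq (k := k) hm (Or.inr (inv_inv _).symm)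
    (inv_ne_zero h0) (by rwa [inv_pow, Ne, inv_eq_one]) (hsep _ (Or.inr rfl) k hk')
    (hsep _ (Or.inr rfl))
  refine ⟨min ε₁ ε₂, lt_min hε₁ hε₂, fun r hr hrε => ?_⟩
  have hmk' := hκ' m hm k hk hmk
  rw [H₁ r hr (hrε.trans_le (min_le_left _ _)), H₂ r hr (hrε.trans_le (min_le_right _ _)),
    upsFactor_inv (hκ k hk).1 hmk'.1 (hsep _ (Or.inl rfl) k hk').2,
    ← neg_upsFactor_eq (mem_Icc.mp hk).2 (hκ k hk).1 hmk'.1 hmk'.2]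
  field_simp
  ring

/-- For all distinct `m, k ∈ {1, …, l}`, the sum of the
residues of `Υ_{m,m,k}` at `μ = κ_m` and at `μ = κ_m⁻¹` exists and equals
`p_{mk} = κ_m(κ_k² - 1)/((κ_m - κ_k)(κ_m κ_k - 1))`, the residues being
expressed as circle integrals of sufficiently small radius. -/
theorem stmt6 (l : ℕ) (hl : 3 ≤ l) (κ : ℕ → ℂ)
    (hκ : ∀ r ∈ Finset.Icc 1 l, κ r ≠ 0 ∧ κ r ≠ 1 ∧ κ r ≠ -1)
    (hκ' : ∀ r ∈ Finset.Icc 1 l, ∀ s ∈ Finset.Icc 1 l, r ≠ s →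
      κ r ≠ κ s ∧ κ r * κ s ≠ 1)
    (m k : ℕ) (hm : m ∈ Finset.Icc 1 l) (hk : k ∈ Finset.Icc 1 l) (hmk : m ≠ k) :
    ∃ ε > (0 : ℝ), ∀ r : ℝ, 0 < r → r < ε →
      (2 * Real.pi * Complex.I)⁻¹ *
        ((∮ μ in C(κ m, r), Ups l κ m m k μ) +
          (∮ μ in C((κ m)⁻¹, r), Ups l κ m m k μ)) =
      κ m * (κ k ^ 2 - 1) / ((κ m - κ k) * (κ m * κ k - 1)) :=
  stmt6_general l κ hκ hκ' m k hm hk hmk
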